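/- Let K > 0 and let q^j be a sequence of measurable functions ℝ → ℝⁿ with γ := sup_j ‖q^j‖²_{H̃^s} < ∞, where ‖q‖²_{H̃^s} = [q]_s² + ∫_ℝ L(x)q(x)·q(x) dx and L is coercive. Suppose q^j → 0 in L²([−K,K], ℝⁿ) as j → ∞. Define β(K) := inf{L(x)ξ·ξ : |ξ| = 1, |x| > K}. Then limsup_{j→∞} ‖q^j‖²_{L²(ℝ,ℝⁿ)} ≤ γ / β(K). -/

import Mathlib

open MeasureTheory ENNReal Matrix Filter Topology

/-- Squared Gagliardo seminorm (double integral, without the constant `c_s`). -/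
noncomputable def gagV (n : ℕ) (s : ℝ) (q : ℝ → Fin n → ℝ) : ℝ≥0∞ :=
  ∫⁻ p : ℝ × ℝ, ENNReal.ofReal ((∑ i, (q p.1 i - q p.2 i) ^ 2) / |p.1 - p.2| ^ (1 + 2 * s))

/-- The quadratic form `∫ L(x) q(x)·q(x) dx`. -/
noncomputable def qformV (n : ℕ) (L : ℝ → Matrix (Fin n) (Fin n) ℝ)
    (q : ℝ → Fin n → ℝ) : ℝ≥0∞ :=
  ∫⁻ x : ℝ, ENNReal.ofReal ((L x).mulVec (q x) ⬝ᵥ q x)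

lemma aux_ofReal_bound {β c d : ℝ} (hβ : 0 < β) (h : β * c ≤ d) :
    ENNReal.ofReal c ≤ ENNReal.ofReal β⁻¹ * ENNReal.ofReal d := by
  rw [← ENNReal.ofReal_mul (by positivity)]
  apply ENNReal.ofReal_le_ofReal
  have h2 := mul_le_mul_of_nonneg_left h (inv_pos.2 hβ).le
  rwa [← mul_assoc, inv_mul_cancel₀ hβ.ne', one_mul] at h2

/-- if `q^j` is bounded in `H̃^s` by `γ` and `q^j → 0` in
`L²([−K,K],ℝⁿ)`, then `limsup_j ‖q^j‖²_{L²(ℝ,ℝⁿ)} ≤ γ / β(K)`, where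
`β(K) = inf{L(x)ξ·ξ : |ξ| = 1, |x| > K}`. -/
theorem concentration_bound
    (n : ℕ) (hn : 1 ≤ n) (s cs α γ K : ℝ) (hs : s ∈ Set.Ioo (0:ℝ) 1) (hcs : 0 < cs)
    (hα : 0 < α) (hK : 0 < K)
    (L : ℝ → Matrix (Fin n) (Fin n) ℝ)
    (hLcont : ∀ i j, Continuous fun x : ℝ => L x i j)
    (hLsymm : ∀ x : ℝ, (L x).IsSymm)
    (hLcoerc : ∀ (x : ℝ) (ξ : Fin n → ℝ), α * (ξ ⬝ᵥ ξ) ≤ (L x).mulVec ξ ⬝ᵥ ξ)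
    (q : ℕ → ℝ → Fin n → ℝ) (hqmeas : ∀ j, Measurable (q j))
    (hγ : ∀ j, ENNReal.ofReal cs * gagV n s (q j) + qformV n L (q j) ≤ ENNReal.ofReal γ)
    (hL2conv : Tendsto (fun j => ∫ x in Set.Icc (-K) K, ∑ i, (q j x i) ^ 2) atTop (𝓝 0))
    (βK : ℝ)
    (hβK : βK = sInf {r : ℝ | ∃ (x : ℝ) (ξ : Fin n → ℝ),
      K < |x| ∧ ξ ⬝ᵥ ξ = 1 ∧ r = (L x).mulVec ξ ⬝ᵥ ξ}) :
    Filter.limsup (fun j => ∫⁻ x : ℝ, ENNReal.ofReal (∑ i, (q j x i) ^ 2)) atTop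
      ≤ ENNReal.ofReal (γ / βK) := by
  obtain ⟨hs0, hs1⟩ := hs
  set S := {r : ℝ | ∃ (x : ℝ) (ξ : Fin n → ℝ),
      K < |x| ∧ ξ ⬝ᵥ ξ = 1 ∧ r = (L x).mulVec ξ ⬝ᵥ ξ} with hS
  have i0 : Fin n := ⟨0, hn⟩
  have hSne : S.Nonempty := by
    refine ⟨(L (K+1)).mulVec (Pi.single i0 1) ⬝ᵥ Pi.single i0 1, K+1, Pi.single i0 1, ?_, ?_, rfl⟩
    · rw [abs_of_pos (by linarith)]; linarith
    · simp [dotProduct, Pi.single_apply]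
  have hSbd : ∀ r ∈ S, α ≤ r := by
    rintro r ⟨x, ξ, hx, hξ, rfl⟩
    have h1 := hLcoerc x ξ
    rw [hξ] at h1; linarith
  have hαβ : α ≤ βK := hβK ▸ le_csInf hSne hSbd
  have hβpos : 0 < βK := lt_of_lt_of_le hα hαβ
  have hβcoerc : ∀ (x : ℝ) (ξ : Fin n → ℝ), K < |x| →
      βK * (ξ ⬝ᵥ ξ) ≤ (L x).mulVec ξ ⬝ᵥ ξ := by
    intro x ξ hx
    have hc0 : 0 ≤ ξ ⬝ᵥ ξ := Finset.sum_nonneg fun i _ => mul_self_nonneg _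
    rcases eq_or_lt_of_le hc0 with h0 | hpos
    · nlinarith [hLcoerc x ξ]
    · set c := ξ ⬝ᵥ ξ with hc
      set a := (Real.sqrt c)⁻¹ with ha
      have hsq : Real.sqrt c * Real.sqrt c = c := Real.mul_self_sqrt hc0
      have hsqpos : 0 < Real.sqrt c := Real.sqrt_pos.2 hpos
      have haa : a * a = c⁻¹ := by
        rw [ha, ← mul_inv]
        rw [hsq]
      have hηdot : (a • ξ) ⬝ᵥ (a • ξ) = 1 := by
        rw [smul_dotProduct, dotProduct_smul, smul_eq_mul, smul_eq_mul, ← mul_assoc, haa, ← hc]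
        field_simp
      have hmem : (L x).mulVec (a • ξ) ⬝ᵥ (a • ξ) ∈ S := ⟨x, a • ξ, hx, hηdot, rfl⟩
      have hβle : βK ≤ (L x).mulVec (a • ξ) ⬝ᵥ (a • ξ) :=
        hβK ▸ csInf_le ⟨α, fun r hr => hSbd r hr⟩ hmem
      have hcomp : (L x).mulVec (a • ξ) ⬝ᵥ (a • ξ) = c⁻¹ * ((L x).mulVec ξ ⬝ᵥ ξ) := by
        rw [Matrix.mulVec_smul, smul_dotProduct, dotProduct_smul, smul_eq_mul, smul_eq_mul,
          ← mul_assoc, haa]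
      rw [hcomp] at hβle
      have := mul_le_mul_of_nonneg_right hβle hc0
      calc βK * c ≤ c⁻¹ * ((L x).mulVec ξ ⬝ᵥ ξ) * c := this
        _ = (L x).mulVec ξ ⬝ᵥ ξ := by field_simp
  have hdot : ∀ j x, (q j x) ⬝ᵥ (q j x) = ∑ i, q j x i ^ 2 := by
    intro j x; simp [dotProduct, sq]
  set F : ℕ → ℝ → ℝ≥0∞ := fun j x => ENNReal.ofReal (∑ i, q j x i ^ 2) with hF
  have hqform_le : ∀ j, qformV n L (q j) ≤ ENNReal.ofReal γ := fun j =>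
    le_trans le_add_self (hγ j)
  have hglob : ∀ j, (∫⁻ x, F j x) ≤ ENNReal.ofReal α⁻¹ * ENNReal.ofReal γ := by
    intro j
    calc (∫⁻ x, F j x)
        ≤ ∫⁻ x, ENNReal.ofReal α⁻¹ * ENNReal.ofReal ((L x).mulVec (q j x) ⬝ᵥ q j x) := by
          apply lintegral_mono; intro x
          show ENNReal.ofReal (∑ i, q j x i ^ 2) ≤
            ENNReal.ofReal α⁻¹ * ENNReal.ofReal ((L x).mulVec (q j x) ⬝ᵥ q j x)
          rw [← hdot]
          exact aux_ofReal_bound hα (hLcoerc x (q j x))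
      _ = ENNReal.ofReal α⁻¹ * qformV n L (q j) := lintegral_const_mul' _ _ ENNReal.ofReal_ne_top
      _ ≤ ENNReal.ofReal α⁻¹ * ENNReal.ofReal γ := mul_le_mul_right (hqform_le j) _
  set T : Set ℝ := (Set.Icc (-K) K)ᶜ with hT
  have htail : ∀ j, (∫⁻ x in T, F j x) ≤ ENNReal.ofReal (γ / βK) := by
    intro j
    calc (∫⁻ x in T, F j x)
        ≤ ∫⁻ x in T, ENNReal.ofReal βK⁻¹ * ENNReal.ofReal ((L x).mulVec (q j x) ⬝ᵥ q j x) := by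
          apply setLIntegral_mono' measurableSet_Icc.compl
          intro x hx
          have hxK : K < |x| := by
            simp only [hT, Set.mem_compl_iff, Set.mem_Icc, not_and_or, not_le] at hx
            rw [lt_abs]
            rcases hx with h | h
            · right; linarith
            · left; exact h
          show ENNReal.ofReal (∑ i, q j x i ^ 2) ≤
            ENNReal.ofReal βK⁻¹ * ENNReal.ofReal ((L x).mulVec (q j x) ⬝ᵥ q j x)
          rw [← hdot]
          exact aux_ofReal_bound hβpos (hβcoerc x (q j x) hxK)
      _ = ENNReal.ofReal βK⁻¹ *
            ∫⁻ x in T, ENNReal.ofReal ((L x).mulVec (q j x) ⬝ᵥ q j x) :=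
          lintegral_const_mul' _ _ ENNReal.ofReal_ne_top
      _ ≤ ENNReal.ofReal βK⁻¹ * qformV n L (q j) :=
          mul_le_mul_right (setLIntegral_le_lintegral _ _) _
      _ ≤ ENNReal.ofReal βK⁻¹ * ENNReal.ofReal γ := mul_le_mul_right (hqform_le j) _
      _ = ENNReal.ofReal (γ / βK) := by
          rw [← ENNReal.ofReal_mul (by positivity)]
          congr 1
          rw [div_eq_mul_inv, mul_comm]
  have hmeasF : ∀ j, Measurable fun x => ∑ i, q j x i ^ 2 := by
    intro j
    apply Finset.measurable_sum
    intro i _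
    exact ((measurable_pi_apply i).comp (hqmeas j)).pow_const 2
  have hnn : ∀ j, (0 : ℝ → ℝ) ≤ᵐ[volume.restrict (Set.Icc (-K) K)]
      fun x => ∑ i, q j x i ^ 2 := fun j =>
    Filter.Eventually.of_forall fun x => Finset.sum_nonneg fun i _ => sq_nonneg _
  have hint : ∀ j, IntegrableOn (fun x => ∑ i, q j x i ^ 2) (Set.Icc (-K) K) := by
    intro j
    refine ⟨(hmeasF j).aestronglyMeasurable, ?_⟩
    rw [hasFiniteIntegral_iff_ofReal (hnn j)]
    exact lt_of_le_of_lt (le_trans (setLIntegral_le_lintegral _ _) (hglob j))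
      (ENNReal.mul_lt_top ENNReal.ofReal_lt_top ENNReal.ofReal_lt_top)
  have hA : ∀ j, (∫⁻ x in Set.Icc (-K) K, F j x) =
      ENNReal.ofReal (∫ x in Set.Icc (-K) K, ∑ i, q j x i ^ 2) := fun j =>
    (ofReal_integral_eq_lintegral_ofReal (hint j) (hnn j)).symm
  have hAtend : Tendsto (fun j => ∫⁻ x in Set.Icc (-K) K, F j x) atTop (𝓝 0) := by
    simp_rw [hA]
    have := ENNReal.tendsto_ofReal hL2conv
    simpa using this
  have hsplit : ∀ j, (∫⁻ x, F j x) = (∫⁻ x in Set.Icc (-K) K, F j x) + (∫⁻ x in T, F j x) :=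
    fun j => (lintegral_add_compl _ measurableSet_Icc).symm
  calc Filter.limsup (fun j => ∫⁻ x : ℝ, ENNReal.ofReal (∑ i, (q j x i) ^ 2)) atTop
      ≤ Filter.limsup (fun j =>
          (∫⁻ x in Set.Icc (-K) K, F j x) + ENNReal.ofReal (γ / βK)) atTop := by
        apply limsup_le_limsup
        apply Filter.Eventually.of_forall
        intro j
        show (∫⁻ x : ℝ, F j x) ≤ (∫⁻ x in Set.Icc (-K) K, F j x) + ENNReal.ofReal (γ / βK)
        rw [hsplit j]
        exact add_le_add_right (htail j) _
        · exact Filter.isCobounded_le_of_bot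
        · exact Filter.isBounded_le_of_top
    _ = ENNReal.ofReal (γ / βK) := by
        have h2 : Tendsto (fun j => (∫⁻ x in Set.Icc (-K) K, F j x) + ENNReal.ofReal (γ / βK))
            atTop (𝓝 (0 + ENNReal.ofReal (γ / βK))) := hAtend.add tendsto_const_nhds
        rw [zero_add] at h2
        exact h2.limsup_eq
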